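/- Corollary 2.5 (second chain): let M ≥ m > 0 and x, y, z ∈ X with Re(My − x, x − my | z) ≥ 0. Then 0 ≤ ‖x|z‖²‖y|z‖² − |(x,y|z)|² ≤ ‖x|z‖²‖y|z‖² − (Re(x,y|z))² ≤ (1/4)·((M − m)²/(mM))·(Re(x,y|z))² ≤ (1/4)·((M − m)²/(mM))·|(x,y|z)|². -/
import Mathlib


open RCLike

/-- A 2-inner product space over `𝕜 = ℝ` or `ℂ`. -/
structure TwoIP (𝕜 : Type) (X : Type) [RCLike 𝕜] [AddCommGroup X] [Module 𝕜 X] where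
  ip : X → X → X → 𝕜
  re_nonneg : ∀ x z : X, 0 ≤ re (ip x x z)
  im_zero : ∀ x z : X, im (ip x x z) = 0
  eq_zero_iff : ∀ x z : X, ip x x z = 0 ↔ ¬ LinearIndependent 𝕜 ![x, z]
  swap : ∀ x z : X, ip x x z = ip z z x
  conj_symm : ∀ x y z : X, ip x y z = (starRingEnd 𝕜) (ip y x z)
  smul_left : ∀ (α : 𝕜) (x y z : X), ip (α • x) y z = α * ip x y z
  add_left : ∀ x x' y z : X, ip (x + x') y z = ip x y z + ip x' y z


section Helpers
variable {𝕜 X : Type} [RCLike 𝕜] [AddCommGroup X] [Module 𝕜 X]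

namespace TwoIP
variable (T : TwoIP 𝕜 X)

lemma neg_left (a y z : X) : T.ip (-a) y z = - T.ip a y z := by
  simpa using T.smul_left (-1) a y z

lemma sub_left (a b y z : X) : T.ip (a - b) y z = T.ip a y z - T.ip b y z := by
  rw [sub_eq_add_neg, T.add_left, T.neg_left, sub_eq_add_neg]

lemma smul_right (α : 𝕜) (a b z : X) :
    T.ip a (α • b) z = (starRingEnd 𝕜) α * T.ip a b z := by
  rw [T.conj_symm, T.smul_left, map_mul, ← T.conj_symm]

lemma sub_right (a b c z : X) : T.ip a (b - c) z = T.ip a b z - T.ip a c z := by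
  rw [T.conj_symm, T.sub_left, map_sub, ← T.conj_symm, ← T.conj_symm]

lemma re_symm (a b z : X) : re (T.ip a b z) = re (T.ip b a z) := by
  rw [T.conj_symm]; simp

end TwoIP

open TwoIP in
lemma expand_self (T : TwoIP 𝕜 X) (x y z : X) (t : 𝕜) :
    re (T.ip (x - t•y) (x - t•y) z) =
      re (T.ip x x z) - 2*re ((starRingEnd 𝕜) t * T.ip x y z) + ‖t‖^2 * re (T.ip y y z) := by
  rw [T.sub_left, T.smul_left, T.sub_right, T.sub_right, T.smul_right, T.smul_right]
  have h1 : t * ((starRingEnd 𝕜) t * T.ip y y z) = ((‖t‖^2:ℝ):𝕜) * T.ip y y z := by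
    rw [← mul_assoc, RCLike.mul_conj]; norm_cast
  have h2 : re (t * T.ip y x z) = re ((starRingEnd 𝕜) t * T.ip x y z) := by
    rw [T.conj_symm y x z]
    have : t * (starRingEnd 𝕜) (T.ip x y z)
        = (starRingEnd 𝕜) ((starRingEnd 𝕜) t * T.ip x y z) := by
      rw [map_mul]; simp [mul_comm]
    rw [this, RCLike.conj_re]
  rw [mul_sub, h1]
  simp only [map_sub, RCLike.re_ofReal_mul, h2]
  ring

lemma expand_h (T : TwoIP 𝕜 X) (x y z : X) (m M : ℝ) :
    re (T.ip (((M : ℝ) : 𝕜) • y - x) (x - ((m : ℝ) : 𝕜) • y) z) =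
      (M+m) * re (T.ip x y z) - re (T.ip x x z) - m*M*re (T.ip y y z) := by
  rw [T.sub_left, T.smul_left, T.sub_right, T.sub_right, T.smul_right, T.smul_right]
  have hc : (starRingEnd 𝕜) ((m:ℝ):𝕜) = ((m:ℝ):𝕜) := by simp
  rw [hc]
  have h2 : re (((M:ℝ):𝕜) * T.ip y x z) = M * re (T.ip x y z) := by
    rw [RCLike.re_ofReal_mul, T.re_symm]
  have h3 : re (((M:ℝ):𝕜) * (((m:ℝ):𝕜) * T.ip y y z)) = M * (m * re (T.ip y y z)) := by
    rw [RCLike.re_ofReal_mul, RCLike.re_ofReal_mul]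
  simp only [map_sub, RCLike.re_ofReal_mul, h2, h3]
  rw [T.re_symm y x z]
  ring


end Helpers

theorem stmt {𝕜 X : Type} [RCLike 𝕜] [AddCommGroup X] [Module 𝕜 X]
    (T : TwoIP 𝕜 X) (hdim : 1 < Module.rank 𝕜 X) (x y z : X) (m M : ℝ) (hm : 0 < m) (hM : m ≤ M)
    (h : 0 ≤ re (T.ip (((M : ℝ) : 𝕜) • y - x) (x - ((m : ℝ) : 𝕜) • y) z)) :
    0 ≤ Real.sqrt (re (T.ip x x z)) ^ 2 * Real.sqrt (re (T.ip y y z)) ^ 2 - ‖T.ip x y z‖ ^ 2 ∧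
    Real.sqrt (re (T.ip x x z)) ^ 2 * Real.sqrt (re (T.ip y y z)) ^ 2 - ‖T.ip x y z‖ ^ 2
      ≤ Real.sqrt (re (T.ip x x z)) ^ 2 * Real.sqrt (re (T.ip y y z)) ^ 2 - re (T.ip x y z) ^ 2 ∧
    Real.sqrt (re (T.ip x x z)) ^ 2 * Real.sqrt (re (T.ip y y z)) ^ 2 - re (T.ip x y z) ^ 2
      ≤ (1/4) * ((M - m) ^ 2 / (m * M)) * re (T.ip x y z) ^ 2 ∧
    (1/4) * ((M - m) ^ 2 / (m * M)) * re (T.ip x y z) ^ 2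
      ≤ (1/4) * ((M - m) ^ 2 / (m * M)) * ‖T.ip x y z‖ ^ 2 := by
  set A := re (T.ip x x z) with hA
  set B := re (T.ip y y z) with hB
  set P := T.ip x y z with hP
  have hA0 : 0 ≤ A := T.re_nonneg x z
  have hB0 : 0 ≤ B := T.re_nonneg y z
  have hN0 : 0 ≤ ‖P‖ := norm_nonneg _
  rw [Real.sq_sqrt hA0, Real.sq_sqrt hB0]
  -- Cauchy–Schwarz via quadratic trick
  have key : ∀ s : ℝ, 0 ≤ A - 2*(s*‖P‖^2) + s^2*‖P‖^2*B := by
    intro s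
    have := T.re_nonneg (x - ((s:𝕜)*P) • y) z
    rw [expand_self T x y z ((s:𝕜)*P)] at this
    have e1 : re ((starRingEnd 𝕜) ((s:𝕜)*P) * P) = s * ‖P‖^2 := by
      rw [show (starRingEnd 𝕜) ((s:𝕜)*P) * P = (s:𝕜) * ((starRingEnd 𝕜) P * P) by
        rw [map_mul, RCLike.conj_ofReal]; ring, RCLike.re_ofReal_mul, RCLike.conj_mul]
      norm_cast
    have e2 : ‖(s:𝕜)*P‖^2 = s^2*‖P‖^2 := by
      rw [norm_mul, mul_pow, RCLike.norm_ofReal, sq_abs]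
    rw [e1, e2] at this
    linarith
  have CS : ‖P‖^2 ≤ A * B := by
    rcases eq_or_lt_of_le hN0 with hN | hN
    · rw [← hN]; simpa using mul_nonneg hA0 hB0
    · have hN2 : 0 < ‖P‖^2 := by positivity
      rcases eq_or_lt_of_le hB0 with hBz | hBz
      · exfalso
        have k := key (A/‖P‖^2 + 1)
        rw [← hBz] at k
        have : (A/‖P‖^2 + 1) * ‖P‖^2 = A + ‖P‖^2 := by field_simp
        nlinarith
      · have k := key (1/B)
        have e : A - 2*((1/B)*‖P‖^2) + (1/B)^2*‖P‖^2*B = A - ‖P‖^2/B := by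
          field_simp; ring
        rw [e] at k
        exact (div_le_iff₀ hBz).mp (by linarith)
  -- hypothesis expansion
  have hh : A + m*M*B ≤ (M+m) * re P := by
    rw [expand_h T x y z m M] at h; linarith
  have hmM : 0 < m * M := mul_pos hm (lt_of_lt_of_le hm hM)
  have hnn : 0 ≤ A + m*M*B := add_nonneg hA0 (mul_nonneg hmM.le hB0)
  have hr0 : 0 ≤ re P := by nlinarith [hnn, hh]
  have hre : re P ^ 2 ≤ ‖P‖^2 := by
    have h1 : |re P| ≤ ‖P‖ := RCLike.abs_re_le_norm P
    calc re P ^ 2 = |re P|^2 := (sq_abs _).symm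
      _ ≤ ‖P‖^2 := by gcongr
  refine ⟨by linarith, by linarith, ?_, ?_⟩
  · have hsq : (A + m*M*B)^2 ≤ ((M+m)*re P)^2 := by nlinarith
    have h4 : 4*(m*M)*(A*B) ≤ (A + m*M*B)^2 := by nlinarith [sq_nonneg (A - m*M*B)]
    rw [show (1/4) * ((M - m) ^ 2 / (m * M)) * re P ^ 2
        = ((M-m)^2 * re P^2) / (4*(m*M)) by field_simp; try ring,
      le_div_iff₀ (by linarith)]
    nlinarith
  · have hc : 0 ≤ (1/4) * ((M - m) ^ 2 / (m * M)) := by positivity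
    exact mul_le_mul_of_nonneg_left hre hc
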